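/- Let M be a loopless matroid on [n]. Then a vector w ∈ ℝ^n lies in the Bergman fan B̃(M) if and only if there exist a chain of flats ∅ ⊊ F₁ ⊊ F₂ ⊊ ⋯ ⊊ F_k ⊊ [n] of M, nonnegative reals c₁,…,c_k, and a real number λ, such that w = λ·(1,…,1) + Σ_{i=1}^k c_i e_{F_i}, where e_{F_i} denotes the 0/1 indicator vector of F_i. -/

import Mathlib

open Finset Pointwise

/-- The 0/1 indicator vector (in `ℝ^n`) of a finite set of coordinates. -/
def indVec {n : ℕ} (S : Finset (Fin n)) : Fin n → ℝ := fun i => if i ∈ S then 1 else 0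

/-- Independence with respect to a family `𝔅` of bases: being contained in a basis. -/
def FamIndep {n : ℕ} (𝔅 : Finset (Finset (Fin n))) (I : Finset (Fin n)) : Prop :=
  ∃ B ∈ 𝔅, I ⊆ B

/-- Circuits of the family `𝔅`: minimal dependent sets. -/
def FamCircuit {n : ℕ} (𝔅 : Finset (Finset (Fin n))) (C : Finset (Fin n)) : Prop :=
  ¬ FamIndep 𝔅 C ∧ ∀ D ⊂ C, FamIndep 𝔅 D

open scoped Classical in
/-- The rank of a set: maximal cardinality of an independent subset. -/
noncomputable def famRk {n : ℕ} (𝔅 : Finset (Finset (Fin n))) (F : Finset (Fin n)) : ℕ :=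
  (F.powerset.filter (fun I => FamIndep 𝔅 I)).sup Finset.card

open scoped Classical in
/-- The bases of the restriction to `F`: the maximal independent subsets of `F`. -/
noncomputable def famRestrictBases {n : ℕ} (𝔅 : Finset (Finset (Fin n)))
    (F : Finset (Fin n)) : Finset (Finset (Fin n)) :=
  F.powerset.filter fun B =>
    FamIndep 𝔅 B ∧ ∀ B' ⊆ F, FamIndep 𝔅 B' → B ⊆ B' → B = B'

open scoped Classical in
/-- The bases of the contraction by `F`: the sets `B \ F` where `B` is a basis meeting `F`
in a set of full rank `rk F`. -/
noncomputable def famContractBases {n : ℕ} (𝔅 : Finset (Finset (Fin n)))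
    (F : Finset (Fin n)) : Finset (Finset (Fin n)) :=
  (𝔅.filter fun B => (B ∩ F).card = famRk 𝔅 F).image (· \ F)

/-- `i` and `j` are related if equal or contained in a common circuit. -/
def FamConnRel {n : ℕ} (𝔅 : Finset (Finset (Fin n))) (i j : Fin n) : Prop :=
  i = j ∨ ∃ C, FamCircuit 𝔅 C ∧ i ∈ C ∧ j ∈ C

/-- Number of connected components: number of classes of the equivalence relation
generated by `FamConnRel`. -/
noncomputable def famNumComponents {n : ℕ} (𝔅 : Finset (Finset (Fin n))) : ℕ :=
  Nat.card (Quot (FamConnRel 𝔅))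

/-- Connectedness of the matroid presented by bases `𝔅` on the ground set `E`:
any two distinct elements of `E` lie in a common circuit (within `E`). -/
def FamConnectedOn {n : ℕ} (𝔅 : Finset (Finset (Fin n))) (E : Finset (Fin n)) : Prop :=
  ∀ i ∈ E, ∀ j ∈ E, i ≠ j → ∃ C, C ⊆ E ∧ FamCircuit 𝔅 C ∧ i ∈ C ∧ j ∈ C

/-- A matroid of rank `r` on the ground set `Fin n`, given by its collection of bases:
`r`-element sets satisfying the basis exchange axiom. -/
structure FinMatroid (n r : ℕ) where
  bases : Finset (Finset (Fin n))
  bases_nonempty : bases.Nonempty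
  card_bases : ∀ B ∈ bases, B.card = r
  exchange : ∀ B₁ ∈ bases, ∀ B₂ ∈ bases, ∀ i ∈ B₁ \ B₂,
      ∃ j ∈ B₂ \ B₁, insert j (B₁.erase i) ∈ bases

namespace FinMatroid

variable {n r : ℕ}

def Indep (M : FinMatroid n r) (I : Finset (Fin n)) : Prop := FamIndep M.bases I

def IsCircuit (M : FinMatroid n r) (C : Finset (Fin n)) : Prop := FamCircuit M.bases C

noncomputable def rk (M : FinMatroid n r) (F : Finset (Fin n)) : ℕ := famRk M.bases F

/-- A flat: no circuit leaves exactly one element outside `F`. -/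
def IsFlat (M : FinMatroid n r) (F : Finset (Fin n)) : Prop :=
  ∀ C, M.IsCircuit C → (C \ F).card ≠ 1

open scoped Classical in
/-- Closure of a set: the intersection of all flats containing it (the smallest flat
containing it). -/
noncomputable def closure (M : FinMatroid n r) (S : Finset (Fin n)) : Finset (Fin n) :=
  Finset.univ.filter fun i => ∀ F, M.IsFlat F → S ⊆ F → i ∈ F

/-- No single element is dependent. -/
def Loopless (M : FinMatroid n r) : Prop := ∀ i : Fin n, M.Indep {i}

noncomputable def numComponents (M : FinMatroid n r) : ℕ := famNumComponents M.bases

/-- Any two distinct elements lie in a common circuit. -/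
def Connected (M : FinMatroid n r) : Prop :=
  ∀ i j : Fin n, i ≠ j → ∃ C, M.IsCircuit C ∧ i ∈ C ∧ j ∈ C

/-- `B` is a `w`-maximal basis of `M`. -/
def IsMaxBasis (M : FinMatroid n r) (w : Fin n → ℝ) (B : Finset (Fin n)) : Prop :=
  B ∈ M.bases ∧ ∀ B' ∈ M.bases, ∑ i ∈ B', w i ≤ ∑ i ∈ B, w i

open scoped Classical in
/-- The bases of the matroid `M_w`: the `w`-maximal bases of `M`. -/
noncomputable def maxBases (M : FinMatroid n r) (w : Fin n → ℝ) :
    Finset (Finset (Fin n)) :=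
  M.bases.filter fun B => ∀ B' ∈ M.bases, ∑ i ∈ B', w i ≤ ∑ i ∈ B, w i

/-- Membership in the Bergman fan: on every circuit the minimum of `w` is attained
at least twice. -/
def InBergmanFan (M : FinMatroid n r) (w : Fin n → ℝ) : Prop :=
  ∀ C, M.IsCircuit C → ∃ i ∈ C, ∃ j ∈ C, i ≠ j ∧ w i = w j ∧ ∀ k ∈ C, w i ≤ w k

/-- The matroid polytope: convex hull of the indicator vectors of the bases. -/
noncomputable def polytope (M : FinMatroid n r) : Set (Fin n → ℝ) :=
  convexHull ℝ (indVec '' ↑M.bases)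

noncomputable def restrictBases (M : FinMatroid n r) (F : Finset (Fin n)) :
    Finset (Finset (Fin n)) :=
  famRestrictBases M.bases F

noncomputable def contractBases (M : FinMatroid n r) (F : Finset (Fin n)) :
    Finset (Finset (Fin n)) :=
  famContractBases M.bases F

/-- `𝓖` is a building set in the lattice of flats of `M` (with bottom element `∅` and
join = closure of union): for every nonempty flat `X`, the join map is an order
isomorphism from the product of the lower intervals of the maximal elements of
`𝓖` below `X` onto the lower interval of `X`. -/
def IsFlatBuilding (M : FinMatroid n r) (𝓖 : Set (Finset (Fin n))) : Prop :=
  (∀ F ∈ 𝓖, M.IsFlat F ∧ F ≠ ∅) ∧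
  ∀ X, M.IsFlat X → X ≠ ∅ →
    ∃ (k : ℕ) (g : Fin k → Finset (Fin n)),
      Function.Injective g ∧
      (∀ i, g i ∈ 𝓖 ∧ g i ⊆ X) ∧
      (∀ i, ∀ H ∈ 𝓖, H ⊆ X → g i ⊆ H → g i = H) ∧
      (∀ H ∈ 𝓖, H ⊆ X → ∃ i, H ⊆ g i) ∧
      ∃ e : (∀ i : Fin k, {F : Finset (Fin n) // M.IsFlat F ∧ F ⊆ g i}) ≃o
              {F : Finset (Fin n) // M.IsFlat F ∧ F ⊆ X},
        ∀ y, (e y).1 = M.closure (Finset.univ.sup fun i => (y i).1)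

/-- `S` is nested with respect to `𝓖` (in the lattice of flats of `M`): `S ⊆ 𝓖` and for
every subcollection of at least two pairwise incomparable members, their join (the
closure of their union) is not in `𝓖`. -/
def IsNested (M : FinMatroid n r) (𝓖 : Set (Finset (Fin n)))
    (S : Finset (Finset (Fin n))) : Prop :=
  ↑S ⊆ 𝓖 ∧ ∀ T ⊆ S, 2 ≤ T.card →
    (∀ A ∈ T, ∀ B ∈ T, A ≠ B → ¬ A ⊆ B ∧ ¬ B ⊆ A) →
    M.closure (T.sup id) ∉ 𝓖

end FinMatroid

/-- A building set in the Boolean lattice of subsets of `Fin r`: for every nonempty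
`X ⊆ [r]`, the union map is an order isomorphism from the product of the lower
intervals of the maximal elements of `𝓕` below `X` onto the lower interval of `X`. -/
def BoolBuilding {r : ℕ} (𝓕 : Set (Finset (Fin r))) : Prop :=
  (∀ F ∈ 𝓕, F ≠ ∅) ∧
  ∀ X : Finset (Fin r), X ≠ ∅ →
    ∃ (k : ℕ) (g : Fin k → Finset (Fin r)),
      Function.Injective g ∧
      (∀ i, g i ∈ 𝓕 ∧ g i ⊆ X) ∧
      (∀ i, ∀ H ∈ 𝓕, H ⊆ X → g i ⊆ H → g i = H) ∧
      (∀ H ∈ 𝓕, H ⊆ X → ∃ i, H ⊆ g i) ∧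
      ∃ e : (∀ i : Fin k, {F : Finset (Fin r) // F ⊆ g i}) ≃o
              {F : Finset (Fin r) // F ⊆ X},
        ∀ y, (e y).1 = Finset.univ.sup fun i => (y i).1

/-- `S` is nested with respect to `𝓕` in the Boolean lattice: for every subcollection
of at least two pairwise incomparable members, their union is not in `𝓕`. -/
def BoolNested {r : ℕ} (𝓕 : Set (Finset (Fin r))) (S : Finset (Finset (Fin r))) : Prop :=
  ↑S ⊆ 𝓕 ∧ ∀ T ⊆ S, 2 ≤ T.card →
    (∀ A ∈ T, ∀ B ∈ T, A ≠ B → ¬ A ⊆ B ∧ ¬ B ⊆ A) →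
    T.sup id ∉ 𝓕

/-- The simplex `Δ_F = conv{e_i : i ∈ F}`. -/
noncomputable def faceSimplex {r : ℕ} (F : Finset (Fin r)) : Set (Fin r → ℝ) :=
  convexHull ℝ ((fun i => (Pi.single i 1 : Fin r → ℝ)) '' ↑F)

/-- The Minkowski sum `Δ_𝓕 = Σ_{F ∈ 𝓕} Δ_F`. -/
noncomputable def minkSum {r : ℕ} (𝓕 : Finset (Finset (Fin r))) : Set (Fin r → ℝ) :=
  ∑ F ∈ 𝓕, faceSimplex F

/-!
Every superlevel set `{t | a ≤ w t}` of a vector `w` in the Bergman fan is a flat: a circuit with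
exactly one element outside it would have a unique minimum of `w`. Since `w` is its minimum plus
the sum of its superlevel sets at its non-minimal values, weighted by the gaps between consecutive
values, this gives the chain.

Conversely, given a chain and a circuit `C`, let `U` be the largest flat of the chain not
containing `C` (or `∅`, a flat because `M` is loopless). Every element of `C \ U` lies in exactly
those flats of the chain that contain all of `C`, so `w` attains its minimum on `C` at each of
them, and `C \ U` has at least two elements because `U` is a flat.
-/

lemma Fin.sum_ite_le_castSucc_sub_succ {G : Type*} [AddCommGroup G] {k : ℕ}
    (f : Fin (k + 1) → G) (J : Fin (k + 1)) :
    ∑ i : Fin k, (if J ≤ i.castSucc then f i.castSucc - f i.succ else 0) =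
      f J - f (Fin.last k) := by
  induction k with
  | zero => simp [Fin.fin_one_eq_zero J]
  | succ k ih =>
    rw [Fin.sum_univ_succ]
    induction J using Fin.cases with
    | zero =>
      have := ih (fun i => f i.succ) 0
      simp only [Fin.zero_le, if_true, Fin.succ_last] at this ⊢
      simp only [← Fin.succ_castSucc, this, Fin.castSucc_zero, Fin.succ_zero_eq_one]
      abel
    | succ J =>
      have := ih (fun i => f i.succ) J
      simp only [Fin.succ_last] at this
      simp [Fin.succ_le_succ_iff, this]

noncomputable def superlevel {ι : Type*} [Fintype ι] (w : ι → ℝ) (a : ℝ) : Finset ι :=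
  univ.filter fun t => a ≤ w t

section Superlevel

variable {ι : Type*} [Fintype ι] {w : ι → ℝ}

@[simp]
lemma mem_superlevel {a : ℝ} {t : ι} : t ∈ superlevel w a ↔ a ≤ w t := by
  simp [superlevel]

lemma superlevel_ssubset_superlevel {a b : ℝ} (hab : a < b) (ha : a ∈ Set.range w) :
    superlevel w b ⊂ superlevel w a := by
  obtain ⟨t, rfl⟩ := ha
  refine (Finset.ssubset_iff_of_subset fun s hs => ?_).mpr ⟨t, ?_, ?_⟩
  · rw [mem_superlevel] at hs ⊢
    linarith
  · simp
  · simpa using hab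

end Superlevel

lemma exists_eq_add_sum_indVec_superlevel {n : ℕ} (w : Fin n → ℝ) :
    ∃ (k : ℕ) (a c : Fin k → ℝ) (lam : ℝ), StrictAnti a ∧ (∀ i, a i ∈ Set.range w) ∧
      (∀ i, ∃ t, w t < a i) ∧ (∀ i, 0 ≤ c i) ∧
      w = fun t => lam + ∑ i, c i * indVec (superlevel w (a i)) t := by
  classical
  rcases isEmpty_or_nonempty (Fin n) with hn | hn
  · exact ⟨0, finZeroElim, finZeroElim, 0, fun i => i.elim0, fun i => i.elim0,
      fun i => i.elim0, fun i => i.elim0, funext fun t => isEmptyElim t⟩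
  set V := univ.image w
  have hV : V.card = V.card - 1 + 1 :=
    (Nat.succ_pred_eq_of_pos (card_pos.mpr (univ_nonempty.image w))).symm
  set k := V.card - 1
  set v : Fin (k + 1) → ℝ := fun j => V.orderEmbOfFin hV (Fin.rev j)
  have hv : StrictAnti v := (V.orderEmbOfFin hV).strictMono.comp_strictAnti Fin.rev_strictAnti
  have hv_range : ∀ j, v j ∈ Set.range w := fun j => by
    obtain ⟨t, -, ht⟩ := mem_image.mp (V.orderEmbOfFin_mem hV (Fin.rev j))
    exact ⟨t, ht⟩
  have hw_range : ∀ t, ∃ J, w t = v J := fun t => by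
    have : w t ∈ Set.range (V.orderEmbOfFin hV) := by simp [V]
    obtain ⟨j, hj⟩ := this
    exact ⟨Fin.rev j, by simp [v, hj]⟩
  refine ⟨k, fun i => v i.castSucc, fun i => v i.castSucc - v i.succ, v (Fin.last k),
    fun i j hij => hv (Fin.castSucc_lt_castSucc_iff.mpr hij), fun i => hv_range _,
    fun i => ?_, fun i => sub_nonneg.mpr (hv.antitone (Fin.castSucc_le_succ i)), ?_⟩
  · obtain ⟨t, ht⟩ := hv_range (Fin.last k)
    exact ⟨t, ht ▸ hv (Fin.castSucc_lt_last i)⟩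
  · funext t
    obtain ⟨J, hJ⟩ := hw_range t
    have hterm : ∀ i : Fin k,
        (v i.castSucc - v i.succ) * indVec (superlevel w (v i.castSucc)) t =
          if J ≤ i.castSucc then v i.castSucc - v i.succ else 0 := fun i => by
      simp only [indVec, mem_superlevel, hJ, hv.le_iff_ge, mul_ite, mul_one, mul_zero]
    simp only [hterm, Fin.sum_ite_le_castSucc_sub_succ, hJ]
    ring

namespace FinMatroid

variable {n r : ℕ} {M : FinMatroid n r}

lemma IsCircuit.nonempty {C : Finset (Fin n)} (hC : M.IsCircuit C) : C.Nonempty := by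
  rw [Finset.nonempty_iff_ne_empty]
  rintro rfl
  obtain ⟨B, hB⟩ := M.bases_nonempty
  exact hC.1 ⟨B, hB, Finset.empty_subset B⟩

lemma Loopless.isFlat_empty (hM : M.Loopless) : M.IsFlat ∅ := by
  intro C hC hcard
  rw [Finset.sdiff_empty, Finset.card_eq_one] at hcard
  obtain ⟨a, rfl⟩ := hcard
  exact hC.1 (hM a)

lemma IsFlat.one_lt_card_sdiff {F C : Finset (Fin n)} (hF : M.IsFlat F) (hC : M.IsCircuit C)
    (hCF : ¬ C ⊆ F) : 1 < (C \ F).card := by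
  have := Finset.card_pos.mpr (Finset.sdiff_nonempty.mpr hCF)
  have := hF C hC
  omega

lemma InBergmanFan.isFlat_superlevel {w : Fin n → ℝ} (hw : M.InBergmanFan w) (a : ℝ) :
    M.IsFlat (superlevel w a) := by
  intro C hC hcard
  obtain ⟨t, ht⟩ := Finset.card_eq_one.mp hcard
  have htC : t ∈ C \ superlevel w a := ht ▸ mem_singleton_self t
  rw [mem_sdiff, mem_superlevel, not_le] at htC
  have h_eq_t : ∀ s ∈ C, w s ≤ w t → s = t := fun s hs hst => by
    have : s ∈ C \ superlevel w a := by
      rw [mem_sdiff, mem_superlevel, not_le]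
      exact ⟨hs, hst.trans_lt htC.2⟩
    rwa [ht, mem_singleton] at this
  obtain ⟨i, hi, j, hj, hij, hwij, hmin⟩ := hw C hC
  exact hij ((h_eq_t i hi (hmin t htC.1)).trans (h_eq_t j hj (hwij ▸ hmin t htC.1)).symm)

lemma Loopless.exists_isFlat_of_monotone {ι : Type*} [Fintype ι] [LinearOrder ι]
    (hM : M.Loopless) {F : ι → Finset (Fin n)} (hF : Monotone F) (hflat : ∀ i, M.IsFlat (F i))
    {C : Finset (Fin n)} (hC : C.Nonempty) :
    ∃ U, M.IsFlat U ∧ ¬ C ⊆ U ∧ ∀ i, ¬ C ⊆ F i → F i ⊆ U := by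
  classical
  by_cases hP : ∀ i, C ⊆ F i
  · exact ⟨∅, hM.isFlat_empty, fun h => hC.ne_empty (subset_empty.mp h),
      fun i hi => absurd (hP i) hi⟩
  obtain ⟨j, hj⟩ := not_forall.mp hP
  obtain ⟨i₀, hi₀, hmax⟩ := Finset.exists_max_image (univ.filter fun i => ¬ C ⊆ F i) id
    ⟨j, by simpa using hj⟩
  simp only [mem_filter, mem_univ, true_and, id] at hi₀ hmax
  exact ⟨F i₀, hflat i₀, hi₀, fun i hi => hF (hmax i hi)⟩

lemma Loopless.inBergmanFan_of_monotone {ι : Type*} [Fintype ι] [LinearOrder ι]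
    (hM : M.Loopless) {F : ι → Finset (Fin n)} (hF : Monotone F) (hflat : ∀ i, M.IsFlat (F i))
    {c : ι → ℝ} (hc : ∀ i, 0 ≤ c i) (lam : ℝ) :
    M.InBergmanFan fun t => lam + ∑ i, c i * indVec (F i) t := by
  classical
  intro C hC
  obtain ⟨U, hU, hCU, hFU⟩ := hM.exists_isFlat_of_monotone hF hflat hC.nonempty
  obtain ⟨s, hs, t, ht, hst⟩ := Finset.one_lt_card.mp (hU.one_lt_card_sdiff hC hCU)
  set m := lam + ∑ i, c i * if C ⊆ F i then 1 else 0
  have h_eq : ∀ s ∈ C \ U, lam + ∑ i, c i * indVec (F i) s = m := fun s hs => by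
    rw [mem_sdiff] at hs
    refine congrArg (lam + ·) (sum_congr rfl fun i _ => ?_)
    by_cases hCF : C ⊆ F i
    · simp [indVec, hCF, hCF hs.1]
    · have hsF : s ∉ F i := fun hsF => hs.2 (hFU i hCF hsF)
      simp [indVec, hCF, hsF]
  have h_le : ∀ x ∈ C, m ≤ lam + ∑ i, c i * indVec (F i) x := fun x hx => by
    refine add_le_add_right (sum_le_sum fun i _ => mul_le_mul_of_nonneg_left ?_ (hc i)) lam
    by_cases hCF : C ⊆ F i
    · simp [indVec, hCF, hCF hx]
    · simp only [indVec, hCF, if_false]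
      split_ifs <;> norm_num
  exact ⟨s, (mem_sdiff.mp hs).1, t, (mem_sdiff.mp ht).1, hst, (h_eq s hs).trans (h_eq t ht).symm,
    fun x hx => (h_eq s hs).trans_le (h_le x hx)⟩

end FinMatroid

/-- For a loopless matroid `M`, `w` lies in the Bergman fan iff `w`
is a translate (by a multiple of `(1,…,1)`) of a nonnegative combination of indicator
vectors of a chain `∅ ⊊ F₁ ⊊ ⋯ ⊊ F_k ⊊ [n]` of flats of `M`. -/
theorem statement14 {n r : ℕ} (M : FinMatroid n r) (hM : M.Loopless) (w : Fin n → ℝ) :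
    M.InBergmanFan w ↔
      ∃ (k : ℕ) (F : Fin k → Finset (Fin n)) (c : Fin k → ℝ) (lam : ℝ),
        (∀ i, M.IsFlat (F i)) ∧ (∀ i, F i ≠ ∅) ∧ (∀ i, F i ≠ Finset.univ) ∧
        (∀ i j : Fin k, i < j → F i ⊂ F j) ∧ (∀ i, 0 ≤ c i) ∧
        w = fun t => lam + ∑ i, c i * indVec (F i) t := by
  constructor
  · intro hw
    obtain ⟨k, a, c, lam, ha, ha_range, ha_gt, hc, hw_eq⟩ := exists_eq_add_sum_indVec_superlevel w
    refine ⟨k, fun i => superlevel w (a i), c, lam, fun i => hw.isFlat_superlevel (a i),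
      fun i => ?_, fun i => ?_, fun i j hij => superlevel_ssubset_superlevel (ha hij) (ha_range j),
      hc, hw_eq⟩
    · obtain ⟨t, ht⟩ := ha_range i
      exact ne_empty_of_mem (a := t) (by simp [ht])
    · obtain ⟨t, ht⟩ := ha_gt i
      exact (ne_of_mem_of_not_mem' (mem_univ t) (by simpa using ht)).symm
  · rintro ⟨k, F, c, lam, hflat, -, -, hchain, hc, rfl⟩
    exact hM.inBergmanFan_of_monotone (StrictMono.monotone hchain) hflat hc lam
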